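/- If f ∈ L^p with p ≥ 1, then for any 0 < γ ≤ δ, ((1/δ) ∫_0^δ |φ_x(t+γ) − φ_x(t)|^p dt)^{1/p} ≤ (2^{1/p} + 4^{1/p}) · w_x f(2δ)_p, where w_x f(2δ)_p = ((1/(2δ)) ∫_0^{2δ} |φ_x(t)|^p dt)^{1/p}. -/

import Mathlib

/-
Convexity of `u ↦ u ^ p` gives `|φ(t+γ) - φ(t)|^p ≤ 2^(p-1) (|φ(t+γ)|^p + |φ(t)|^p)`. Since
`0 < γ ≤ δ`, both `[0, δ]` and `[γ, δ + γ]` lie in `[0, 2δ]`, so the mean of the left side over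
`[0, δ]` is at most `2^(p+1)` times the mean of `|φ|^p` over `[0, 2δ]`; taking `p`-th roots,
`(2^(p+1))^(1/p) = 2 · 2^(1/p) ≤ 2^(1/p) + 4^(1/p)`. Integrability of `|φ|^p` on `[0, 2δ]` comes
from its `2π`-periodicity.
-/

open MeasureTheory Real intervalIntegral

namespace Real

theorem rpow_add_le_mul_rpow_add_rpow {a b p : ℝ} (ha : 0 ≤ a) (hb : 0 ≤ b) (hp : 1 ≤ p) :
    (a + b) ^ p ≤ 2 ^ (p - 1) * (a ^ p + b ^ p) := by
  lift a to NNReal using ha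
  lift b to NNReal using hb
  exact_mod_cast NNReal.rpow_add_le_mul_rpow_add_rpow a b hp

theorem rpow_abs_sub_le {a b p : ℝ} (hp : 1 ≤ p) :
    |a - b| ^ p ≤ 2 ^ (p - 1) * (|a| ^ p + |b| ^ p) :=
  (rpow_le_rpow (abs_nonneg _) (abs_sub a b) (by linarith)).trans
    (rpow_add_le_mul_rpow_add_rpow (abs_nonneg a) (abs_nonneg b) hp)

theorem two_mul_two_rpow_le_two_rpow_add_four_rpow {q : ℝ} (hq : 0 ≤ q) :
    2 * 2 ^ q ≤ (2 : ℝ) ^ q + 4 ^ q := by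
  have h4 : (4 : ℝ) ^ q = 2 ^ q * 2 ^ q := by
    rw [show (4 : ℝ) = 2 * 2 by norm_num, mul_rpow zero_le_two zero_le_two]
  nlinarith [one_le_rpow one_le_two hq]

end Real

namespace intervalIntegral

theorem integral_mono_of_nonneg {f g : ℝ → ℝ} {a b : ℝ} (hab : a ≤ b) (hf : ∀ t, 0 ≤ f t)
    (hg : IntervalIntegrable g volume a b) (hfg : ∀ t, f t ≤ g t) :
    ∫ t in a..b, f t ≤ ∫ t in a..b, g t := by
  rw [integral_of_le hab, integral_of_le hab]
  exact MeasureTheory.integral_mono_of_nonneg (.of_forall hf) hg.1 (.of_forall hfg)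

theorem integral_comp_add_right_le_of_nonneg {g : ℝ → ℝ} {γ δ : ℝ} (hγ : 0 ≤ γ) (hγδ : γ ≤ δ)
    (hg : ∀ t, 0 ≤ g t) (hint : IntervalIntegrable g volume 0 (2 * δ)) :
    ∫ t in (0 : ℝ)..δ, g (t + γ) ≤ ∫ t in (0 : ℝ)..2 * δ, g t := by
  rw [integral_comp_add_right, zero_add]
  exact integral_mono_interval hγ (by linarith) (by linarith) (.of_forall hg) hint

end intervalIntegral

theorem integral_rpow_abs_shift_sub_le {φ : ℝ → ℝ} {p γ δ : ℝ} (hp : 1 ≤ p) (hγ : 0 ≤ γ)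
    (hγδ : γ ≤ δ) (hint : IntervalIntegrable (fun t => |φ t| ^ p) volume 0 (2 * δ)) :
    ∫ t in (0 : ℝ)..δ, |φ (t + γ) - φ t| ^ p ≤ 2 ^ p * ∫ t in (0 : ℝ)..2 * δ, |φ t| ^ p := by
  set g : ℝ → ℝ := fun t => |φ t| ^ p
  have hg : ∀ t, 0 ≤ g t := fun t => rpow_nonneg (abs_nonneg _) p
  have hδ : 0 ≤ δ := hγ.trans hγδ
  have hsub : ∀ a b, 0 ≤ a → a ≤ b → b ≤ 2 * δ → IntervalIntegrable g volume a b :=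
    fun a b ha hab hb => hint.mono_set (Set.uIcc_subset_uIcc (Set.mem_uIcc_of_le ha (by linarith))
      (Set.mem_uIcc_of_le (by linarith) hb))
  have hshift : IntervalIntegrable (fun t => g (t + γ)) volume 0 δ := by
    simpa using (hsub γ (δ + γ) hγ (by linarith) (by linarith)).comp_add_right γ
  have hrestrict : IntervalIntegrable g volume 0 δ := hsub 0 δ le_rfl hδ (by linarith)
  calc ∫ t in (0 : ℝ)..δ, |φ (t + γ) - φ t| ^ p
      ≤ ∫ t in (0 : ℝ)..δ, 2 ^ (p - 1) * (g (t + γ) + g t) :=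
        integral_mono_of_nonneg hδ (fun t => rpow_nonneg (abs_nonneg _) p)
          ((hshift.add hrestrict).const_mul _) (fun t => rpow_abs_sub_le hp)
    _ = 2 ^ (p - 1) * ((∫ t in (0 : ℝ)..δ, g (t + γ)) + ∫ t in (0 : ℝ)..δ, g t) := by
        rw [intervalIntegral.integral_const_mul, integral_add hshift hrestrict]
    _ ≤ 2 ^ (p - 1) * (2 * ∫ t in (0 : ℝ)..2 * δ, g t) := by
        gcongr
        have h₁ := integral_comp_add_right_le_of_nonneg hγ hγδ hg hint
        have h₂ := integral_mono_interval le_rfl hδ (by linarith) (.of_forall hg) hint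
        linarith
    _ = 2 ^ p * ∫ t in (0 : ℝ)..2 * δ, g t := by
        rw [← mul_assoc, ← rpow_add_one two_ne_zero, sub_add_cancel]

theorem mean_rpow_abs_shift_sub_le {φ : ℝ → ℝ} {p γ δ : ℝ} (hp : 1 ≤ p) (hγ : 0 ≤ γ)
    (hγδ : γ ≤ δ) (hint : IntervalIntegrable (fun t => |φ t| ^ p) volume 0 (2 * δ)) :
    ((1 / δ) * ∫ t in (0 : ℝ)..δ, |φ (t + γ) - φ t| ^ p) ^ (1 / p)
      ≤ (2 ^ (1 / p) + 4 ^ (1 / p)) *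
        ((1 / (2 * δ)) * ∫ t in (0 : ℝ)..2 * δ, |φ t| ^ p) ^ (1 / p) := by
  have hδ : 0 ≤ δ := hγ.trans hγδ
  have hp₀ : 0 < p := zero_lt_one.trans_le hp
  set M := (1 / (2 * δ)) * ∫ t in (0 : ℝ)..2 * δ, |φ t| ^ p
  have hM : 0 ≤ M := mul_nonneg (by positivity) (integral_nonneg (by linarith)
    fun t _ => rpow_nonneg (abs_nonneg _) p)
  have hmean : (1 / δ) * ∫ t in (0 : ℝ)..δ, |φ (t + γ) - φ t| ^ p ≤ 2 ^ p * (2 * M) :=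
    calc (1 / δ) * ∫ t in (0 : ℝ)..δ, |φ (t + γ) - φ t| ^ p
        ≤ (1 / δ) * (2 ^ p * ∫ t in (0 : ℝ)..2 * δ, |φ t| ^ p) := by
          gcongr
          exact integral_rpow_abs_shift_sub_le hp hγ hγδ hint
      _ = 2 ^ p * (2 * M) := by ring
  calc ((1 / δ) * ∫ t in (0 : ℝ)..δ, |φ (t + γ) - φ t| ^ p) ^ (1 / p)
      ≤ (2 ^ p * (2 * M)) ^ (1 / p) :=
        rpow_le_rpow (mul_nonneg (by positivity) (integral_nonneg hδ
          fun t _ => rpow_nonneg (abs_nonneg _) p)) hmean (by positivity)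
    _ = 2 * 2 ^ (1 / p) * M ^ (1 / p) := by
        rw [mul_rpow (by positivity) (by positivity), mul_rpow zero_le_two hM,
          ← rpow_mul zero_le_two, mul_one_div_cancel hp₀.ne', rpow_one, mul_assoc]
    _ ≤ (2 ^ (1 / p) + 4 ^ (1 / p)) * M ^ (1 / p) := by
        gcongr
        exact two_mul_two_rpow_le_two_rpow_add_four_rpow (by positivity)

/-- `((1/δ)∫_0^δ |φ_x(t+γ)-φ_x(t)|^p dt)^{1/p}
  ≤ (2^{1/p}+4^{1/p}) w_x f(2δ)_p`. -/
theorem shifted_difference_le_modulus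
    (f : ℝ → ℝ) (hper : ∀ t, f (t + 2 * π) = f t)
    (p δ γ : ℝ) (hp : 1 ≤ p) (hγ : 0 < γ) (hγδ : γ ≤ δ) (x : ℝ)
    (hint : IntervalIntegrable
      (fun t => |f (x + t) + f (x - t) - 2 * f x| ^ p) volume (-π) π) :
    ((1 / δ) * ∫ t in (0:ℝ)..δ,
        |(f (x + (t + γ)) + f (x - (t + γ)) - 2 * f x)
          - (f (x + t) + f (x - t) - 2 * f x)| ^ p) ^ (1 / p)
      ≤ (2 ^ (1 / p) + 4 ^ (1 / p)) *
        ((1 / (2 * δ)) * ∫ t in (0:ℝ)..2 * δ,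
          |f (x + t) + f (x - t) - 2 * f x| ^ p) ^ (1 / p) := by
  have hf : Function.Periodic f (2 * π) := hper
  have hφ : Function.Periodic (fun t => |f (x + t) + f (x - t) - 2 * f x| ^ p) (2 * π) := by
    intro t
    simp only [← add_assoc, hf (x + t), show x - (t + 2 * π) = x - t - 2 * π by ring, hf.sub_eq]
  have hperiod : -π + 2 * π = π := by ring
  exact mean_rpow_abs_shift_sub_le (φ := fun t => f (x + t) + f (x - t) - 2 * f x) hp hγ.le hγδ
    (hφ.intervalIntegrable (t := -π) (by positivity) (by rwa [hperiod]) 0 (2 * δ))
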